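/- arXiv:1903.11375 — 4 statements merged into one kernel-verified Lean document; each statement's English description precedes it below -/
import Mathlib

section
/- For m = 2^k with k ≥ 1 and b ≥ 1, one has 1 - q_m ≥ (k/2^k) · (b/2^{b/2}) · ln 2, where q_m = m^{-b/m}. -/
/-! With `x = b k log 2 / 2^k` one has `q_m = exp (-x)`, and `1 + x ≤ exp x` gives
`1 - exp (-x) ≥ x exp (-x)`. Since `2k ≤ 2^k`, `x ≤ (b/2) log 2`, so `exp (-x) ≥ 2^(-b/2)`,
and `x · 2^(-b/2)` is exactly the claimed lower bound. -/

open Real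

lemma Nat.two_mul_le_two_pow (k : ℕ) : 2 * k ≤ 2 ^ k := by
  cases k with
  | zero => simp
  | succ k => have := k.lt_two_pow_self; rw [pow_succ]; omega

lemma Real.mul_exp_neg_le_one_sub_exp_neg (x : ℝ) : x * exp (-x) ≤ 1 - exp (-x) := by
  have h : (1 + x) * exp (-x) ≤ exp x * exp (-x) :=
    mul_le_mul_of_nonneg_right (by linarith [add_one_le_exp x]) (exp_pos _).le
  rw [← exp_add, add_neg_cancel, exp_zero] at h
  linarith

lemma natCast_mul_log_two_div_two_pow_le (k : ℕ) : k * log 2 / 2 ^ k ≤ log 2 / 2 := by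
  have hk : (2 : ℝ) * k ≤ 2 ^ k := by exact_mod_cast k.two_mul_le_two_pow
  rw [div_le_div_iff₀ (by positivity) two_pos]
  nlinarith [log_pos one_lt_two]

lemma two_pow_rpow_neg_div_two_pow (b : ℝ) (k : ℕ) :
    ((2 : ℝ) ^ k) ^ (-(b / 2 ^ k)) = exp (-(b * (k * log 2 / 2 ^ k))) := by
  rw [rpow_def_of_pos (by positivity), log_pow]
  ring_nf

theorem stmt4_general (b : ℝ) (hb : 1 ≤ b) (k : ℕ) :
    ((k : ℝ) / 2 ^ k) * (b / (2 : ℝ) ^ (b / 2)) * Real.log 2 ≤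
      1 - ((2 : ℝ) ^ k) ^ (-(b / (2 : ℝ) ^ k)) := by
  set y : ℝ := k * log 2 / 2 ^ k
  have hb0 : 0 ≤ b := by linarith
  have h2b : (2 : ℝ) ^ (b / 2) = exp (b * (log 2 / 2)) := by
    rw [rpow_def_of_pos two_pos]; ring_nf
  rw [two_pow_rpow_neg_div_two_pow, h2b]
  calc (k : ℝ) / 2 ^ k * (b / exp (b * (log 2 / 2))) * log 2
      = b * y * exp (-(b * (log 2 / 2))) := by rw [exp_neg]; ring
    _ ≤ b * y * exp (-(b * y)) := by
        gcongr
        exact natCast_mul_log_two_div_two_pow_le k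
    _ ≤ 1 - exp (-(b * y)) := mul_exp_neg_le_one_sub_exp_neg _

/-- For `m = 2^k`, `k ≥ 1`, `b ≥ 1`, one has
`1 - m^(-b/m) ≥ (k/2^k) (b/2^(b/2)) log 2`. -/
theorem stmt4 (b : ℝ) (hb : 1 ≤ b) (k : ℕ) (hk : 1 ≤ k) :
    ((k : ℝ) / 2 ^ k) * (b / (2 : ℝ) ^ (b / 2)) * Real.log 2 ≤
      1 - ((2 : ℝ) ^ k) ^ (-(b / (2 : ℝ) ^ k)) :=
  stmt4_general b hb k
end

section
/- Define r_1 := r_0/8 and recursively r_{k+1} := q_{2^k}(r_k - δ_k) for k ≥ 1, where δ_k = δ/4^k, δ = r_0/c_1, q_m = m^{-b/m}, and c_1 ≥ 4^{b+2}/3. Then for all k ≥ 1, r_k ≥ 4^{-b}(1/8 - (4^b/3)(1/c_1)) r_0; in particular with c_1 = 4^{b+2}/3 one has r_k ≥ r_0/4^{b+2}. -/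
/-!
Since `0 ≤ q_m ≤ 1`, unrolling the recursion gives
`r_k ≥ (∏_{1≤j<k} q_{2^j}) r_1 - ∑_{1≤j<k} δ_j`. The product equals `2^(-b ∑_{1≤j<k} j/2^j)`,
which is at least `2^(-2b) = 4^(-b)` because `∑_j j/2^j = 2`, and the geometric sum
`∑_j δ/4^j` is at most `δ/3`.
-/

open Finset

theorem prod_mul_sub_sum_le_of_eq_mul_sub {s p d : ℕ → ℝ} (hp₀ : ∀ n, 0 ≤ p n)
    (hp₁ : ∀ n, p n ≤ 1) (hd : ∀ n, 0 ≤ d n) (hs : ∀ n, s (n + 1) = p n * (s n - d n))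
    (n : ℕ) : (∏ i ∈ range n, p i) * s 0 - ∑ i ∈ range n, d i ≤ s n := by
  induction n with
  | zero => simp
  | succ n ih =>
    have hS : 0 ≤ ∑ i ∈ range n, d i := sum_nonneg fun i _ => hd i
    rw [prod_range_succ, sum_range_succ, hs]
    nlinarith [mul_le_mul_of_nonneg_left ih (hp₀ n), hp₁ n, hd n]

theorem sum_range_succ_div_two_pow (n : ℕ) :
    ∑ i ∈ range n, ((i : ℝ) + 1) / 2 ^ (i + 1) = 2 - (n + 2) / 2 ^ n := by
  induction n with
  | zero => norm_num
  | succ n ih =>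
    rw [sum_range_succ, ih]
    push_cast
    field_simp
    ring

theorem sum_range_div_four_pow (δ : ℝ) (n : ℕ) :
    ∑ i ∈ range n, δ / 4 ^ (i + 1) = δ / 3 * (1 - 1 / 4 ^ n) := by
  induction n with
  | zero => simp
  | succ n ih =>
    rw [sum_range_succ, ih]
    field_simp
    ring

theorem four_rpow_neg_le_prod_two_pow_rpow {b : ℝ} (hb : 0 ≤ b) (n : ℕ) :
    (4 : ℝ) ^ (-b) ≤ ∏ i ∈ range n, ((2 : ℝ) ^ (i + 1)) ^ (-(b / 2 ^ (i + 1))) := by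
  have hfactor : ∀ i : ℕ, ((2 : ℝ) ^ (i + 1)) ^ (-(b / 2 ^ (i + 1)))
      = (2 : ℝ) ^ (-b * (((i : ℝ) + 1) / 2 ^ (i + 1))) := by
    intro i
    rw [← Real.rpow_natCast_mul (by norm_num)]
    push_cast
    ring_nf
  have hsum := sum_range_succ_div_two_pow n
  have htail : 0 ≤ ((n : ℝ) + 2) / 2 ^ n := by positivity
  calc (4 : ℝ) ^ (-b) = (2 : ℝ) ^ (-b * 2) := by
        rw [Real.rpow_mul (by norm_num), show (4 : ℝ) = 2 ^ (2 : ℝ) by norm_num,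
          ← Real.rpow_mul (by norm_num), ← Real.rpow_mul (by norm_num), mul_comm]
    _ ≤ (2 : ℝ) ^ (-b * ∑ i ∈ range n, ((i : ℝ) + 1) / 2 ^ (i + 1)) :=
        Real.rpow_le_rpow_of_exponent_le (by norm_num) (by nlinarith)
    _ = ∏ i ∈ range n, ((2 : ℝ) ^ (i + 1)) ^ (-(b / 2 ^ (i + 1))) := by
        rw [mul_sum, Real.rpow_sum_of_pos (by norm_num)]
        exact prod_congr rfl fun i _ => (hfactor i).symm

theorem four_rpow_neg_mul_sub_le_of_eq_mul_sub {r₀ b δ : ℝ} (hr₀ : 0 ≤ r₀) (hb : 0 ≤ b)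
    (hδ : 0 ≤ δ) {q r : ℕ → ℝ} (hq : ∀ m : ℕ, 0 < m → q m = (m : ℝ) ^ (-(b / (m : ℝ))))
    (hr₁ : r 1 = r₀ / 8) (hrec : ∀ k : ℕ, 1 ≤ k → r (k + 1) = q (2 ^ k) * (r k - δ / 4 ^ k))
    {k : ℕ} (hk : 1 ≤ k) : (4 : ℝ) ^ (-b) * (r₀ / 8) - δ / 3 ≤ r k := by
  obtain ⟨n, rfl⟩ : ∃ n, k = n + 1 := ⟨k - 1, by omega⟩
  have hq₂ : ∀ i : ℕ, q (2 ^ (i + 1)) = ((2 : ℝ) ^ (i + 1)) ^ (-(b / 2 ^ (i + 1))) := by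
    intro i
    rw [hq _ (by positivity)]
    push_cast
    rfl
  have hbound := prod_mul_sub_sum_le_of_eq_mul_sub (s := fun n => r (n + 1))
    (p := fun i => q (2 ^ (i + 1))) (d := fun i => δ / 4 ^ (i + 1))
    (fun i => by rw [hq₂]; positivity)
    (fun i => by
      rw [hq₂]
      exact Real.rpow_le_one_of_one_le_of_nonpos (one_le_pow₀ (by norm_num))
        (neg_nonpos.mpr (by positivity)))
    (fun i => by positivity) (fun i => hrec (i + 1) (by omega)) n
  simp only [hq₂, hr₁, sum_range_div_four_pow] at hbound
  have hprod := mul_le_mul_of_nonneg_right (four_rpow_neg_le_prod_two_pow_rpow hb n)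
    (div_nonneg hr₀ (by norm_num : (0 : ℝ) ≤ 8))
  have hgeom : δ / 3 * (1 - 1 / 4 ^ n) ≤ δ / 3 := by
    have : (0 : ℝ) ≤ 1 / 4 ^ n := by positivity
    nlinarith
  linarith

/-- With `r_1 = r_0/8` and `r_{k+1} = q_{2^k}(r_k - δ_k)` where `δ_k = δ/4^k`,
`δ = r_0/c_1`, `q_m = m^(-b/m)`, `c_1 ≥ 4^{b+2}/3`, one has for all `k ≥ 1`
`r_k ≥ 4^{-b}(1/8 - (4^b/3)(1/c_1)) r_0`; with `c_1 = 4^{b+2}/3`, `r_k ≥ r_0/4^{b+2}`. -/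
theorem stmt5 (r0 b c1 : ℝ) (hr0 : 0 < r0) (hb : 1 ≤ b)
    (hc1 : (4 : ℝ) ^ (b + 2) / 3 ≤ c1)
    (q : ℕ → ℝ) (hq : ∀ m : ℕ, 0 < m → q m = (m : ℝ) ^ (-(b / (m : ℝ))))
    (δ : ℝ) (hδ : δ = r0 / c1)
    (r : ℕ → ℝ) (hr1 : r 1 = r0 / 8)
    (hrec : ∀ k : ℕ, 1 ≤ k → r (k + 1) = q (2 ^ k) * (r k - δ / 4 ^ k)) :
    (∀ k : ℕ, 1 ≤ k →
      (4 : ℝ) ^ (-b) * (1 / 8 - (4 : ℝ) ^ b / 3 * (1 / c1)) * r0 ≤ r k) ∧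
    (c1 = (4 : ℝ) ^ (b + 2) / 3 →
      ∀ k : ℕ, 1 ≤ k → r0 / (4 : ℝ) ^ (b + 2) ≤ r k) := by
  have hc1_pos : 0 < c1 := lt_of_lt_of_le (by positivity) hc1
  have hbound : ∀ k : ℕ, 1 ≤ k → (4 : ℝ) ^ (-b) * (r0 / 8) - δ / 3 ≤ r k := fun k hk =>
    four_rpow_neg_mul_sub_le_of_eq_mul_sub hr0.le (by linarith) (by rw [hδ]; positivity)
      hq hr1 hrec hk
  have hlhs : (4 : ℝ) ^ (-b) * (1 / 8 - (4 : ℝ) ^ b / 3 * (1 / c1)) * r0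
      = (4 : ℝ) ^ (-b) * (r0 / 8) - δ / 3 := by
    rw [hδ, Real.rpow_neg (by norm_num)]
    field_simp
  refine ⟨fun k hk => hlhs ▸ hbound k hk, fun hc k hk => le_of_eq_of_le ?_ (hbound k hk)⟩
  rw [hδ, hc, Real.rpow_add (by norm_num), Real.rpow_neg (by norm_num)]
  rw [show (4 : ℝ) ^ (2 : ℝ) = 16 by norm_num]
  field_simp
  ring
end

section
/- Let E^i (i ≥ 1) be the linear vector fields on the space of sequences (z_j)_{j∈ℤ\{0}} given by E^i(z) = z_i e_i − z_{−i} e_{−i}, so [E^i, z^Q e_l] = ((Q,μ^i) − μ^i_l) z^Q e_l with μ^i_j = δ^i_j − δ^i_{−j}. Suppose a family {F^i} of homogeneous polynomial vector fields of degree d is a nonresonant cocycle, i.e. ((Q,μ^i) − μ^i_l) F^j_{Q,l} = ((Q,μ^j) − μ^j_l) F^i_{Q,l} for all i,j,Q,l, and for each (Q,l) with some F^j_{Q,l} ≠ 0 there exists i with (Q,μ^i) − μ^i_l ≠ 0. Then there exists a unique formal homogeneous polynomial vector field U of degree d with no resonant terms such that [E^i, U] = F^i for all i ≥ 1. -/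
/-!
Each `[E^i, ·]` acts diagonally on monomials, so `[E^i, U] = F^i` decouples into one scalar
system `λ^i u = f^i` per monomial `z^Q e_l`. If some `λ^i` is nonzero, `u = f^i / λ^i` is forced,
and the cocycle identity `λ^i f^j = λ^j f^i` makes it solve every equation. If all `λ^i` vanish,
nonresonance forces all `f^i = 0`, and the normalisation "no resonant terms" forces `u = 0`.
-/

/-- Nonzero integers, the index set of the sequence space. -/
abbrev Zstar : Type := {j : ℤ // j ≠ 0}

/-- `μ^i_j = δ^i_j - δ^i_{-j}`. -/
def mu (i : ℕ) (j : Zstar) : ℤ :=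
  (if (j : ℤ) = (i : ℤ) then 1 else 0) - (if (j : ℤ) = -(i : ℤ) then 1 else 0)

/-- The eigenvalue `(Q, μ^i) - μ^i_l` of `[E^i, ·]` on the monomial `z^Q e_l`. -/
def lam (i : ℕ) (Q : Zstar →₀ ℕ) (l : Zstar) : ℤ :=
  (Q.sum fun j n => (n : ℤ) * mu i j) - mu i l

section ScalarCocycle

variable {ι K : Type*} [Field K] {p : ι → Prop} {a f : ι → K}

theorem existsUnique_mul_eq_of_cocycle
    (hcoc : ∀ i j, p i → p j → a i * f j = a j * f i)
    (hnres : (∃ j, p j ∧ f j ≠ 0) → ∃ i, p i ∧ a i ≠ 0) :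
    ∃! u : K, ((∀ i, p i → a i = 0) → u = 0) ∧ ∀ i, p i → a i * u = f i := by
  by_cases hres : ∃ i, p i ∧ a i ≠ 0
  · obtain ⟨i, hi, hai⟩ := hres
    refine ⟨f i / a i, ⟨fun hall => absurd (hall i hi) hai, fun j hj => ?_⟩, ?_⟩
    · rw [mul_div_assoc', div_eq_iff hai, ← hcoc i j hi hj, mul_comm]
    · rintro v ⟨-, hv⟩
      rw [eq_div_iff hai, mul_comm, hv i hi]
  · push Not at hres
    have hf : ∀ j, p j → f j = 0 := fun j hj => by
      by_contra hfj
      obtain ⟨i, hi, hai⟩ := hnres ⟨j, hj, hfj⟩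
      exact hai (hres i hi)
    refine ⟨0, ⟨fun _ => rfl, fun j hj => by rw [mul_zero, hf j hj]⟩, ?_⟩
    rintro v ⟨hv, -⟩
    exact hv hres

end ScalarCocycle

/-- If a family `{F^i}` of homogeneous polynomial vector fields of degree `d`
(given by its monomial coefficients `F i Q l`) is a nonresonant cocycle, then there
is a unique homogeneous vector field `U` of degree `d` with no resonant terms such
that `[E^i, U] = F^i` for all `i ≥ 1`, i.e. `lam i Q l * U Q l = F i Q l`. -/
theorem stmt9 (d : ℕ) (F : ℕ → (Zstar →₀ ℕ) → Zstar → ℂ)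
    (hdeg : ∀ i Q l, 1 ≤ i → F i Q l ≠ 0 → (Q.sum fun _ n => n) = d)
    (hcoc : ∀ i j Q l, 1 ≤ i → 1 ≤ j →
      (lam i Q l : ℂ) * F j Q l = (lam j Q l : ℂ) * F i Q l)
    (hnres : ∀ Q l, (∃ j, 1 ≤ j ∧ F j Q l ≠ 0) → ∃ i, 1 ≤ i ∧ lam i Q l ≠ 0) :
    ∃! U : (Zstar →₀ ℕ) → Zstar → ℂ,
      (∀ Q l, (∀ i, 1 ≤ i → lam i Q l = 0) → U Q l = 0) ∧
      (∀ Q l, U Q l ≠ 0 → (Q.sum fun _ n => n) = d) ∧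
      (∀ i Q l, 1 ≤ i → (lam i Q l : ℂ) * U Q l = F i Q l) := by
  have hcoef : ∀ Q l, ∃! u : ℂ, ((∀ i, 1 ≤ i → lam i Q l = 0) → u = 0) ∧
      ∀ i, 1 ≤ i → (lam i Q l : ℂ) * u = F i Q l := fun Q l => by
    simpa only [Int.cast_eq_zero] using existsUnique_mul_eq_of_cocycle
      (fun i j => hcoc i j Q l)
      (fun h => (hnres Q l h).imp fun _ ⟨hi, hlam⟩ => ⟨hi, Int.cast_ne_zero.mpr hlam⟩)
  choose U hU hUunique using hcoef
  refine ⟨U, ⟨fun Q l => (hU Q l).1, fun Q l hUQl => ?_, fun i Q l hi => (hU Q l).2 i hi⟩, ?_⟩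
  · obtain ⟨i, hi, hlam⟩ : ∃ i, 1 ≤ i ∧ lam i Q l ≠ 0 := by
      by_contra! hall
      exact hUQl ((hU Q l).1 hall)
    refine hdeg i Q l hi ?_
    rw [← (hU Q l).2 i hi]
    exact mul_ne_zero (Int.cast_ne_zero.mpr hlam) hUQl
  · rintro V ⟨hVres, -, hVsol⟩
    funext Q l
    exact hUunique Q l (V Q l) ⟨hVres Q l, fun i hi => hVsol i Q l hi⟩
end

section
/- Let U, F be vector fields with majorant norms ‖U‖_r = ε and ‖F‖_r bounded, and let 0 < δ < r. For each k ≥ 1, the k-th iterated adjoint satisfies ‖Ad_U^k F / k!‖_{r−δ} ≤ (‖F‖_r / e) · (2e ε/δ)^k, where Ad_U F = [U,F]. Consequently, if ε < δ/(4e), the Lie series ∑_{k≥1} Ad_U^k F / k! converges on the ball of radius r−δ with sum bounded in norm by (4/δ)‖F‖_r ε, and ∑_{k≥2} Ad_U^k F/k! is bounded by (8e/δ²)‖F‖_r ε². -/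
/-- `k^k ≤ k! * e^(k-1)` for `k ≥ 1`. -/
lemma stmt15_fact_bound : ∀ k : ℕ, 1 ≤ k →
    (k : ℝ) ^ k ≤ (k.factorial : ℝ) * Real.exp ((k : ℝ) - 1) := by
  intro k hk
  induction k, hk using Nat.le_induction with
  | base => simp
  | succ k hk ih =>
    have hk0 : (0:ℝ) < k := by positivity
    have h1 : ((k:ℝ) + 1) ≤ k * Real.exp (1 / k) := by
      have := Real.add_one_le_exp (1 / (k:ℝ))
      calc ((k:ℝ) + 1) = k * (1 / k + 1) := by field_simp; ring
        _ ≤ k * Real.exp (1 / k) := by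
            exact mul_le_mul_of_nonneg_left this (le_of_lt hk0)
    have h2 : ((k:ℝ) + 1) ^ k ≤ (k : ℝ) ^ k * Real.exp 1 := by
      calc ((k:ℝ) + 1) ^ k ≤ (k * Real.exp (1 / k)) ^ k :=
            pow_le_pow_left₀ (by positivity) h1 k
        _ = (k:ℝ) ^ k * Real.exp (1 / k) ^ k := mul_pow _ _ _
        _ = (k:ℝ) ^ k * Real.exp 1 := by
            rw [← Real.exp_nat_mul]
            congr 1
            field_simp
    have hfin : ((k:ℝ) + 1) ^ (k + 1) ≤ ((k+1 : ℕ).factorial : ℝ) * Real.exp ((k:ℝ) + 1 - 1) := by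
      calc ((k:ℝ) + 1) ^ (k + 1) = ((k:ℝ) + 1) * ((k:ℝ) + 1) ^ k := by ring
        _ ≤ ((k:ℝ) + 1) * ((k : ℝ) ^ k * Real.exp 1) := by
            exact mul_le_mul_of_nonneg_left h2 (by positivity)
        _ ≤ ((k:ℝ) + 1) * ((k.factorial : ℝ) * Real.exp ((k : ℝ) - 1) * Real.exp 1) := by
            refine mul_le_mul_of_nonneg_left (mul_le_mul_of_nonneg_right ih ?_) (by positivity)
            positivity
        _ = ((k+1 : ℕ).factorial : ℝ) * Real.exp ((k:ℝ) + 1 - 1) := by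
            have hE : Real.exp ((k:ℝ) - 1) * Real.exp 1 = Real.exp ((k:ℝ) + 1 - 1) := by
              rw [← Real.exp_add]; ring_nf
            rw [Nat.factorial_succ]
            push_cast
            rw [← hE]; ring
    simpa using hfin

/-- Lie series estimates.  `nrm ρ` is the majorant norm `‖·‖_ρ` on vector fields,
`T = Ad_U = [U, ·]` and the Cauchy estimate
`‖[U,G]‖_{ρ-δ₂} ≤ (2/δ₂) ε ‖G‖_ρ` holds with `ε = ‖U‖_r`.  Then
`‖Ad_U^k F / k!‖_{r-δ} ≤ (‖F‖_r/e) (2eε/δ)^k`; and if `ε < δ/(4e)` the Lie series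
`∑_{k≥1} Ad_U^k F/k!` converges on radius `r-δ` with sum of norms at most
`(4/δ)‖F‖_r ε`, while `∑_{k≥2}` is bounded by `(8e/δ²)‖F‖_r ε²`. -/
theorem stmt15 {X : Type*} [AddCommGroup X] [Module ℝ X]
    (nrm : ℝ → X → ℝ) (T : X →ₗ[ℝ] X) (F : X) (r δ ε : ℝ)
    (hδ : 0 < δ) (hδr : δ < r) (hε : 0 ≤ ε)
    (hnonneg : ∀ ρ G, 0 ≤ nrm ρ G)
    (hhom : ∀ (ρ : ℝ) (c : ℝ) (G : X), nrm ρ (c • G) = |c| * nrm ρ G)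
    (hcauchy : ∀ (G : X) (ρ δ₂ : ℝ), 0 < δ₂ → δ₂ ≤ ρ → ρ ≤ r →
      nrm (ρ - δ₂) (T G) ≤ 2 / δ₂ * ε * nrm ρ G) :
    (∀ k : ℕ, 1 ≤ k →
      nrm (r - δ) ((1 / (k.factorial : ℝ)) • ((T ^ k) F)) ≤
        nrm r F / Real.exp 1 * (2 * Real.exp 1 * ε / δ) ^ k) ∧
    (ε < δ / (4 * Real.exp 1) →
      Summable (fun k : ℕ =>
        nrm (r - δ) ((1 / ((k + 1).factorial : ℝ)) • ((T ^ (k + 1)) F))) ∧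
      (∑' k : ℕ, nrm (r - δ) ((1 / ((k + 1).factorial : ℝ)) • ((T ^ (k + 1)) F)))
        ≤ 4 / δ * nrm r F * ε ∧
      (∑' k : ℕ, nrm (r - δ) ((1 / ((k + 2).factorial : ℝ)) • ((T ^ (k + 2)) F)))
        ≤ 8 * Real.exp 1 / δ ^ 2 * nrm r F * ε ^ 2) := by
  have he : (0:ℝ) < Real.exp 1 := Real.exp_pos 1
  have hr : (0:ℝ) < r := lt_trans hδ hδr
  -- main pointwise estimate
  have main : ∀ k : ℕ, 1 ≤ k →
      nrm (r - δ) ((1 / (k.factorial : ℝ)) • ((T ^ k) F)) ≤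
        nrm r F / Real.exp 1 * (2 * Real.exp 1 * ε / δ) ^ k := by
    intro k hk
    have hk0 : (0:ℝ) < k := by exact_mod_cast hk
    -- iterated Cauchy estimate with step δ/k
    have iter : ∀ j : ℕ, j ≤ k →
        nrm (r - j * (δ / k)) ((T ^ j) F) ≤ (2 * k / δ * ε) ^ j * nrm r F := by
      intro j hj
      induction j with
      | zero => simp
      | succ j ihj =>
        have hj' : j ≤ k := Nat.le_of_succ_le hj
        have ihj := ihj hj'
        have hstep : (0:ℝ) < δ / k := by positivity
        have hjk : ((j:ℝ) + 1) * (δ / k) ≤ δ := by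
          have : ((j:ℝ) + 1) ≤ k := by exact_mod_cast hj
          calc ((j:ℝ) + 1) * (δ / k) ≤ k * (δ / k) :=
                mul_le_mul_of_nonneg_right this (le_of_lt hstep)
            _ = δ := by field_simp
        have hle : δ / k ≤ r - j * (δ / k) := by nlinarith [hjk, hδr]
        have hle2 : r - j * (δ / k) ≤ r := by nlinarith [hstep, (by positivity : (0:ℝ) ≤ (j:ℝ))]
        have hc := hcauchy ((T ^ j) F) (r - j * (δ / k)) (δ / k) hstep hle hle2
        have heq : (T ^ (j + 1)) F = T ((T ^ j) F) := by
          rw [pow_succ']; rfl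
        have hρ : r - j * (δ / k) - δ / k = r - (j + 1 : ℕ) * (δ / k) := by push_cast; ring
        have h2k : 2 / (δ / k) = 2 * k / δ := by field_simp
        calc nrm (r - (j + 1 : ℕ) * (δ / k)) ((T ^ (j + 1)) F)
            = nrm (r - j * (δ / k) - δ / k) (T ((T ^ j) F)) := by rw [heq, hρ]
          _ ≤ 2 / (δ / k) * ε * nrm (r - j * (δ / k)) ((T ^ j) F) := hc
          _ ≤ 2 * k / δ * ε * ((2 * k / δ * ε) ^ j * nrm r F) := by
              rw [h2k]
              exact mul_le_mul_of_nonneg_left ihj (by positivity)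
          _ = (2 * k / δ * ε) ^ (j + 1) * nrm r F := by ring
    have ikk := iter k le_rfl
    have hkk : r - k * (δ / k) = r - δ := by field_simp
    rw [hkk] at ikk
    have hfac : (0:ℝ) < (k.factorial : ℝ) := by exact_mod_cast k.factorial_pos
    have hfb := stmt15_fact_bound k hk
    -- (2kε/δ)^k / k! ≤ (2eε/δ)^k / e
    have key : (2 * k / δ * ε) ^ k / (k.factorial : ℝ) ≤
        (2 * Real.exp 1 * ε / δ) ^ k / Real.exp 1 := by
      have h1 : (2 * (k:ℝ) / δ * ε) ^ k = (k:ℝ) ^ k * (2 * ε / δ) ^ k := by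
        rw [← mul_pow]; congr 1; ring
      have h2 : (2 * Real.exp 1 * ε / δ) ^ k = Real.exp 1 ^ k * (2 * ε / δ) ^ k := by
        rw [← mul_pow]; congr 1; ring
      have h3 : (k:ℝ) ^ k * (2 * ε / δ) ^ k ≤
          ((k.factorial : ℝ) * Real.exp ((k:ℝ) - 1)) * (2 * ε / δ) ^ k :=
        mul_le_mul_of_nonneg_right hfb (by positivity)
      rw [h1, h2, div_le_div_iff₀ hfac he]
      have h4 : Real.exp ((k:ℝ) - 1) * Real.exp 1 = Real.exp 1 ^ k := by
        rw [← Real.exp_add, ← Real.exp_nat_mul]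
        congr 1; ring
      have h5 := mul_le_mul_of_nonneg_right h3 he.le
      calc (k:ℝ) ^ k * (2 * ε / δ) ^ k * Real.exp 1
          ≤ (k.factorial : ℝ) * Real.exp ((k:ℝ) - 1) * (2 * ε / δ) ^ k * Real.exp 1 := h5
        _ = Real.exp 1 ^ k * (2 * ε / δ) ^ k * (k.factorial : ℝ) := by rw [← h4]; ring
    calc nrm (r - δ) ((1 / (k.factorial : ℝ)) • ((T ^ k) F))
        = (1 / (k.factorial : ℝ)) * nrm (r - δ) ((T ^ k) F) := by
          rw [hhom]; congr 1; rw [abs_of_pos]; positivity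
      _ ≤ (1 / (k.factorial : ℝ)) * ((2 * k / δ * ε) ^ k * nrm r F) :=
          mul_le_mul_of_nonneg_left ikk (by positivity)
      _ = (2 * k / δ * ε) ^ k / (k.factorial : ℝ) * nrm r F := by ring
      _ ≤ (2 * Real.exp 1 * ε / δ) ^ k / Real.exp 1 * nrm r F :=
          mul_le_mul_of_nonneg_right key (hnonneg _ _)
      _ = nrm r F / Real.exp 1 * (2 * Real.exp 1 * ε / δ) ^ k := by ring
  refine ⟨main, fun hsmall => ?_⟩
  set q : ℝ := 2 * Real.exp 1 * ε / δ with hq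
  set a : ℝ := nrm r F / Real.exp 1 with ha
  have hq0 : 0 ≤ q := by positivity
  have ha0 : 0 ≤ a := by have := hnonneg r F; positivity
  have hqhalf : q ≤ 1 / 2 := by
    have h4e : (0:ℝ) < 4 * Real.exp 1 := by positivity
    rw [lt_div_iff₀ h4e] at hsmall
    rw [hq, div_le_div_iff₀ hδ (by norm_num : (0:ℝ) < 2)]
    nlinarith [hsmall]
  have hq1 : q < 1 := lt_of_le_of_lt hqhalf (by norm_num)
  have hsumgeo : Summable fun n : ℕ => q ^ n := summable_geometric_of_lt_one hq0 hq1
  have hbound1 : ∀ n : ℕ, nrm (r - δ) ((1 / ((n + 1).factorial : ℝ)) • ((T ^ (n + 1)) F))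
      ≤ a * q * q ^ n := by
    intro n
    have := main (n + 1) (Nat.le_add_left 1 n)
    calc nrm (r - δ) ((1 / ((n + 1).factorial : ℝ)) • ((T ^ (n + 1)) F))
        ≤ a * q ^ (n + 1) := this
      _ = a * q * q ^ n := by ring
  have hbound2 : ∀ n : ℕ, nrm (r - δ) ((1 / ((n + 2).factorial : ℝ)) • ((T ^ (n + 2)) F))
      ≤ a * q ^ 2 * q ^ n := by
    intro n
    have := main (n + 2) (by omega)
    calc nrm (r - δ) ((1 / ((n + 2).factorial : ℝ)) • ((T ^ (n + 2)) F))
        ≤ a * q ^ (n + 2) := this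
      _ = a * q ^ 2 * q ^ n := by ring
  have hsum1 : Summable (fun k : ℕ =>
      nrm (r - δ) ((1 / ((k + 1).factorial : ℝ)) • ((T ^ (k + 1)) F))) :=
    Summable.of_nonneg_of_le (fun n => hnonneg _ _) hbound1 (by exact (hsumgeo.mul_left _))
  have hsum2 : Summable (fun k : ℕ =>
      nrm (r - δ) ((1 / ((k + 2).factorial : ℝ)) • ((T ^ (k + 2)) F))) :=
    Summable.of_nonneg_of_le (fun n => hnonneg _ _) hbound2 (by exact (hsumgeo.mul_left _))
  have hinv : (1 - q)⁻¹ ≤ 2 := by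
    rw [inv_le_comm₀ (by linarith) (by norm_num)]
    linarith
  have hgeo : ∑' n : ℕ, q ^ n = (1 - q)⁻¹ := tsum_geometric_of_lt_one hq0 hq1
  refine ⟨hsum1, ?_, ?_⟩
  · calc (∑' k : ℕ, nrm (r - δ) ((1 / ((k + 1).factorial : ℝ)) • ((T ^ (k + 1)) F)))
        ≤ ∑' k : ℕ, a * q * q ^ k := Summable.tsum_le_tsum hbound1 hsum1 (hsumgeo.mul_left _)
      _ = a * q * (1 - q)⁻¹ := by rw [tsum_mul_left, hgeo]
      _ ≤ a * q * 2 := mul_le_mul_of_nonneg_left hinv (by positivity)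
      _ = 4 / δ * nrm r F * ε := by
          rw [ha, hq]; field_simp; ring
  · calc (∑' k : ℕ, nrm (r - δ) ((1 / ((k + 2).factorial : ℝ)) • ((T ^ (k + 2)) F)))
        ≤ ∑' k : ℕ, a * q ^ 2 * q ^ k := Summable.tsum_le_tsum hbound2 hsum2 (hsumgeo.mul_left _)
      _ = a * q ^ 2 * (1 - q)⁻¹ := by rw [tsum_mul_left, hgeo]
      _ ≤ a * q ^ 2 * 2 := mul_le_mul_of_nonneg_left hinv (by positivity)
      _ = 8 * Real.exp 1 / δ ^ 2 * nrm r F * ε ^ 2 := by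
          rw [ha, hq]; field_simp; ring
end
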